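/- arXiv:1806.02484 — 2 statements merged into one kernel-verified Lean document; each statement's English description precedes it below -/
import Mathlib

section
/- Let γ : [0,1] → ℝ² be a continuously differentiable map with γ(0) = γ(1), injective on [0,1), and with γ'(t) ≠ 0 for all t ∈ [0,1]. Then there exist points 0 ≤ a ≤ b ≤ c ≤ 1 such that γ(0) + γ(b) = γ(a) + γ(c) (so the four points γ(0), γ(a), γ(b), γ(c), in this cyclic order, are the vertices of a parallelogram with one vertex at the prescribed point γ(0)), the four points γ(0), γ(a), γ(b), γ(c) are pairwise distinct, and moreover ∫_0^a ‖γ'(t)‖ dt + ∫_b^c ‖γ'(t)‖ dt = ∫_a^b ‖γ'(t)‖ dt + ∫_c^1 ‖γ'(t)‖ dt. -/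
/-!
Parametrize the loop by arc length, so that it becomes a loop `Γ` on `[0, L]`. For
`u, v ∈ (0, L/2)` the points with parameters `0, u, u + L/2 - v, L - v` cut it into four arcs,
opposite ones having total length `L/2`, so it suffices to find a zero of
`F (u, v) = Γ u + Γ (L - v) - Γ 0 - Γ (u + L/2 - v)` in the open square `(0, L/2)²`.
Injectivity keeps `F` away from zero on the boundary of the square. There `F` is constant on
two sides, and `F (0, L/2 - t) = -F (t, 0)` relates the other two, so `F` winds an odd number of
times around `0` along the boundary. This is impossible if `F` does not vanish on the square,
since `F` then has a continuous logarithm there.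
-/

open Set MeasureTheory

theorem IsPreconnected.apply_eq_of_exp_eq_const {X : Type*} [TopologicalSpace X] {S : Set X}
    (hS : IsPreconnected S) {f : X → ℂ} (hf : ContinuousOn f S) {c : ℂ}
    (hfc : ∀ x ∈ S, Complex.exp (f x) = c) {x y : X} (hx : x ∈ S) (hy : y ∈ S) : f x = f y := by
  have hmaps : MapsTo (fun z => f z - f x) S
      (AddSubgroup.zmultiples (2 * Real.pi * Complex.I)) := by
    intro z hz
    have hc : c ≠ 0 := hfc x hx ▸ Complex.exp_ne_zero _
    have h1 : Complex.exp (f z - f x) = 1 := by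
      rw [Complex.exp_sub, hfc z hz, hfc x hx, div_self hc]
    obtain ⟨n, hn⟩ := Complex.exp_eq_one_iff.1 h1
    exact ⟨n, by simp [zsmul_eq_mul, hn]⟩
  have hdisc : IsDiscrete (AddSubgroup.zmultiples (2 * Real.pi * Complex.I) : Set ℂ) :=
    isDiscrete_iff_discreteTopology.2 (NormedSpace.discreteTopology_zmultiples _)
  simpa [eq_comm, sub_eq_zero] using
    hS.constant_of_mapsTo hdisc (hf.sub continuousOn_const) hmaps hx hy

theorem Convex.exists_continuousOn_exp_eq {E : Type*} [NormedAddCommGroup E] [NormedSpace ℝ E]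
    {K : Set E} (hK : Convex ℝ K) {g : E → ℂ} (hgc : ContinuousOn g K)
    (hg0 : ∀ x ∈ K, g x ≠ 0) :
    ∃ f : E → ℂ, ContinuousOn f K ∧ ∀ x ∈ K, Complex.exp (f x) = g x := by
  classical
  rcases K.eq_empty_or_nonempty with rfl | ⟨x₀, hx₀⟩
  · exact ⟨0, continuousOn_empty _, by simp⟩
  have := hK.contractibleSpace ⟨x₀, hx₀⟩
  have := hK.locallyPathConnectedSpace
  obtain ⟨F, -, hF⟩ := (Complex.isCoveringMapOn_exp.existsUnique_continuousMap_lifts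
    ⟨K.domRestrict g, hgc.domRestrict⟩ (a₀ := ⟨x₀, hx₀⟩) (Complex.exp_log (hg0 x₀ hx₀))
    (fun x => hg0 x x.2)).exists
  refine ⟨fun x => if hx : x ∈ K then F ⟨x, hx⟩ else 0, ?_, fun x hx => ?_⟩
  · rw [continuousOn_iff_continuous_domRestrict]
    convert F.continuous
    funext x
    simp [x.2]
  · simpa [hx] using congr_fun hF ⟨x, hx⟩

theorem exists_zero_of_antipodal_boundary {l : ℝ} (hl : 0 ≤ l) {F : ℝ × ℝ → ℂ} {w : ℂ}
    (hF : ContinuousOn F (Icc 0 l ×ˢ Icc 0 l))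
    (hright : ∀ t ∈ Icc 0 l, F (l, t) = w) (htop : ∀ t ∈ Icc 0 l, F (t, l) = w)
    (hanti : ∀ t ∈ Icc 0 l, F (0, l - t) = -F (t, 0)) :
    ∃ z ∈ Icc 0 l ×ˢ Icc 0 l, F z = 0 := by
  by_contra! hF0
  obtain ⟨h, hhc, hh⟩ := ((convex_Icc 0 l).prod (convex_Icc 0 l)).exists_continuousOn_exp_eq hF hF0
  have h0 : (0 : ℝ) ∈ Icc 0 l := left_mem_Icc.2 hl
  have hl' : l ∈ Icc 0 l := right_mem_Icc.2 hl
  have hflip : MapsTo (fun t => l - t) (Icc 0 l) (Icc 0 l) := fun t ht =>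
    ⟨by linarith [ht.2], by linarith [ht.1]⟩
  have along {p : ℝ → ℝ × ℝ} (hp : Continuous p) (hpK : MapsTo p (Icc 0 l) (Icc 0 l ×ˢ Icc 0 l))
      {c : ℂ} (hFc : ∀ t ∈ Icc 0 l, F (p t) = c) : h (p 0) = h (p l) :=
    isPreconnected_Icc.apply_eq_of_exp_eq_const (hhc.comp hp.continuousOn hpK)
      (fun t ht => (hh _ (hpK ht)).trans (hFc t ht)) h0 hl'
  have hR : h (l, 0) = h (l, l) := along (p := fun t => (l, t)) (by fun_prop)
    (fun t ht => ⟨hl', ht⟩) hright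
  have hT : h (0, l) = h (l, l) := along (p := fun t => (t, l)) (by fun_prop)
    (fun t ht => ⟨ht, hl'⟩) htop
  have hD : h (0, l - 0) - h (0, 0) = h (0, l - l) - h (l, 0) := by
    refine isPreconnected_Icc.apply_eq_of_exp_eq_const
      (f := fun t => h (0, l - t) - h (t, 0)) (c := -1) ?_ (fun t ht => ?_) h0 hl'
    · exact (hhc.comp (by fun_prop) (fun t ht => ⟨h0, hflip ht⟩)).sub
        (hhc.comp (by fun_prop) (fun t ht => ⟨ht, h0⟩))
    · rw [Complex.exp_sub, hh _ ⟨h0, hflip ht⟩, hh _ ⟨ht, h0⟩, hanti t ht,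
        neg_div_self (hF0 _ ⟨ht, h0⟩)]
  have hD0 : h (0, l) - h (0, 0) = 0 := by
    simp only [sub_zero, sub_self] at hD
    linear_combination (hD + hT - hR) / 2
  have hsame : F (0, l) = F (0, 0) := by
    rw [← hh _ ⟨h0, hl'⟩, ← hh _ ⟨h0, h0⟩, sub_eq_zero.1 hD0]
  have hopp : F (0, l) = -F (0, 0) := by simpa using hanti 0 h0
  exact hF0 _ ⟨h0, h0⟩ (by linear_combination (hopp - hsame) / 2)

theorem Set.InjOn.apply_add_half_ne {α : Type*} {Γ : ℝ → α} {L : ℝ}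
    (hinj : InjOn Γ (Ico 0 L)) (hL : 0 < L) (hloop : Γ L = Γ 0) {t : ℝ}
    (ht : t ∈ Icc 0 (L / 2)) : Γ (t + L / 2) ≠ Γ t := by
  rcases ht.2.eq_or_lt with rfl | ht'
  · rw [add_halves, hloop]
    exact fun h => hL.ne' (by linarith [hinj ⟨le_rfl, hL⟩ ⟨by linarith, by linarith⟩ h])
  · exact fun h => (by linarith : t + L / 2 ≠ t)
      (hinj ⟨by linarith [ht.1], by linarith⟩ ⟨ht.1, by linarith⟩ h)

theorem exists_parallelogram_of_injOn {Γ : ℝ → ℂ} {L : ℝ} (hL : 0 < L)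
    (hΓ : ContinuousOn Γ (Icc 0 L)) (hloop : Γ L = Γ 0) (hinj : InjOn Γ (Ico 0 L)) :
    ∃ u ∈ Ioo 0 (L / 2), ∃ v ∈ Ioo 0 (L / 2), Γ 0 + Γ (u + L / 2 - v) = Γ u + Γ (L - v) := by
  set F : ℝ × ℝ → ℂ := fun z => Γ z.1 + Γ (L - z.2) - Γ 0 - Γ (z.1 + L / 2 - z.2) with hF
  have hbot : ∀ t ∈ Icc 0 (L / 2), F (t, 0) ≠ 0 := fun t ht h =>
    hinj.apply_add_half_ne hL hloop ht <| by
      simp only [hF, sub_zero, hloop] at h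
      linear_combination -h
  have hw : Γ (L / 2) - Γ 0 ≠ 0 :=
    sub_ne_zero.2 (by simpa using hinj.apply_add_half_ne hL hloop ⟨le_rfl, by linarith⟩)
  have hcont : ContinuousOn F (Icc 0 (L / 2) ×ˢ Icc 0 (L / 2)) := by
    have comp {φ : ℝ × ℝ → ℝ} (hφ : Continuous φ)
        (hmaps : MapsTo φ (Icc 0 (L / 2) ×ˢ Icc 0 (L / 2)) (Icc 0 L)) :
        ContinuousOn (fun z => Γ (φ z)) (Icc 0 (L / 2) ×ˢ Icc 0 (L / 2)) :=
      hΓ.comp hφ.continuousOn hmaps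
    refine (((comp continuous_fst ?_).add (comp (by fun_prop) ?_)).sub continuousOn_const).sub
      (comp (by fun_prop) ?_) <;>
    · rintro ⟨u, v⟩ ⟨⟨hu0, hu1⟩, hv0, hv1⟩
      constructor <;> dsimp only <;> linarith
  have hright : ∀ t ∈ Icc 0 (L / 2), F (L / 2, t) = Γ (L / 2) - Γ 0 := fun t _ => by
    simp only [hF]; ring_nf
  have htop : ∀ t ∈ Icc 0 (L / 2), F (t, L / 2) = Γ (L / 2) - Γ 0 := fun t _ => by
    simp only [hF]; ring_nf
  have hanti : ∀ t ∈ Icc 0 (L / 2), F (0, L / 2 - t) = -F (t, 0) := fun t _ => by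
    simp only [hF, sub_zero, hloop]; ring_nf
  obtain ⟨⟨u, v⟩, ⟨hu, hv⟩, huv⟩ :=
    exists_zero_of_antipodal_boundary (by positivity) hcont hright htop hanti
  refine ⟨u, ⟨hu.1.lt_of_ne ?_, hu.2.lt_of_ne ?_⟩, v, ⟨hv.1.lt_of_ne ?_, hv.2.lt_of_ne ?_⟩, ?_⟩
  · rintro rfl
    have hv' : L / 2 - v ∈ Icc 0 (L / 2) := ⟨by linarith [hv.2], by linarith [hv.1]⟩
    exact hbot _ hv' (neg_eq_zero.1 (by rwa [← hanti _ hv', sub_sub_cancel]))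
  · rintro rfl
    exact hw (hright v hv ▸ huv)
  · rintro rfl
    exact hbot u hu huv
  · rintro rfl
    exact hw (htop u hu ▸ huv)
  · simp only [hF] at huv
    linear_combination -huv

theorem StrictMonoOn.exists_continuous_invOn {σ : ℝ → ℝ} {a b : ℝ} (hab : a ≤ b)
    (hσ : StrictMonoOn σ (Icc a b)) (hσc : ContinuousOn σ (Icc a b)) :
    ∃ τ : ℝ → ℝ, Continuous τ ∧ MapsTo τ (Icc (σ a) (σ b)) (Icc a b) ∧
      InvOn τ σ (Icc a b) (Icc (σ a) (σ b)) := by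
  have hmaps : MapsTo σ (Icc a b) (Icc (σ a) (σ b)) := fun t ht =>
    ⟨hσ.monotoneOn (left_mem_Icc.2 hab) ht ht.1, hσ.monotoneOn ht (right_mem_Icc.2 hab) ht.2⟩
  have hsurj : Function.Surjective hmaps.restrict := fun y => by
    obtain ⟨t, ht, hty⟩ := intermediate_value_Icc hab hσc y.2
    exact ⟨⟨t, ht⟩, Subtype.ext hty⟩
  let e := StrictMono.orderIsoOfSurjective hmaps.restrict (fun x y hxy => hσ x.2 y.2 hxy) hsurj
  have hσab : σ a ≤ σ b := hσ.monotoneOn (left_mem_Icc.2 hab) (right_mem_Icc.2 hab) hab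
  refine ⟨fun y => e.symm (projIcc (σ a) (σ b) hσab y), by fun_prop, fun y _ => (e.symm _).2,
    fun t ht => ?_, fun y hy => ?_⟩
  · simp only [projIcc_of_mem hσab (hmaps ht)]
    exact congrArg Subtype.val (e.symm_apply_apply ⟨t, ht⟩)
  · simp only [projIcc_of_mem hσab hy]
    exact congrArg Subtype.val (e.apply_symm_apply ⟨y, hy⟩)

theorem exists_parallelogram_of_strictMonoOn {E : Type*} [NormedAddCommGroup E]
    [NormedSpace ℝ E] (hE : Module.finrank ℝ E = 2) {γ : ℝ → E} {σ : ℝ → ℝ}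
    (hγ : ContinuousOn γ (Icc 0 1)) (hloop : γ 0 = γ 1) (hinj : InjOn γ (Ico 0 1))
    (hσ : StrictMonoOn σ (Icc 0 1)) (hσc : ContinuousOn σ (Icc 0 1)) :
    ∃ a b c : ℝ, 0 < a ∧ a < b ∧ b < c ∧ c < 1 ∧ γ 0 + γ b = γ a + γ c ∧
      σ a - σ 0 + (σ c - σ b) = σ b - σ a + (σ 1 - σ c) := by
  obtain ⟨τ, hτc, hτmaps, hτσ, hστ⟩ := hσ.exists_continuous_invOn zero_le_one hσc
  have h0 : (0 : ℝ) ∈ Icc 0 1 := left_mem_Icc.2 zero_le_one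
  have h1 : (1 : ℝ) ∈ Icc 0 1 := right_mem_Icc.2 zero_le_one
  have hτ : StrictMonoOn τ (Icc (σ 0) (σ 1)) := fun y hy y' hy' hyy' => by
    rwa [← hσ.lt_iff_lt (hτmaps hy) (hτmaps hy'), hστ hy, hστ hy']
  set L := σ 1 - σ 0 with hLdef
  have hL : 0 < L := sub_pos.2 (hσ h0 h1 one_pos)
  have hI {y : ℝ} (hy : y ∈ Icc 0 L) : σ 0 + y ∈ Icc (σ 0) (σ 1) :=
    ⟨by linarith [hy.1], by linarith [hy.2]⟩
  have hτ' {x y : ℝ} (hx : x ∈ Icc 0 L) (hy : y ∈ Icc 0 L) (hxy : x < y) :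
      τ (σ 0 + x) < τ (σ 0 + y) := hτ (hI hx) (hI hy) (by linarith)
  have hτ_mem {y : ℝ} (hy : y ∈ Ico 0 L) : τ (σ 0 + y) ∈ Ico 0 1 :=
    ⟨(hτmaps (hI (Ico_subset_Icc_self hy))).1, by
      simpa [hLdef, hτσ h1] using hτ' (Ico_subset_Icc_self hy) ⟨hL.le, le_rfl⟩ hy.2⟩
  have := Module.finite_of_finrank_eq_succ hE
  let e : E ≃L[ℝ] ℂ := .ofFinrankEq (by rw [hE, Complex.finrank_real_complex])
  let Γ : ℝ → ℂ := fun y => e (γ (τ (σ 0 + y)))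
  have hΓ : ContinuousOn Γ (Icc 0 L) :=
    e.continuous.comp_continuousOn (hγ.comp (by fun_prop) fun y hy => hτmaps (hI hy))
  have hΓloop : Γ L = Γ 0 := by
    simp only [Γ, L, add_sub_cancel, add_zero, hτσ h0, hτσ h1, hloop]
  have hΓinj : InjOn Γ (Ico 0 L) := fun x hx y hy hxy => by
    have := congrArg σ (hinj (hτ_mem hx) (hτ_mem hy) (e.injective hxy))
    rw [hστ (hI (Ico_subset_Icc_self hx)), hστ (hI (Ico_subset_Icc_self hy))] at this
    linarith
  obtain ⟨u, hu, v, hv, huv⟩ := exists_parallelogram_of_injOn hL hΓ hΓloop hΓinj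
  have hu' : u ∈ Icc 0 L := ⟨hu.1.le, by linarith [hu.2]⟩
  have hw' : u + L / 2 - v ∈ Icc 0 L := ⟨by linarith [hu.1, hv.2], by linarith [hu.2, hv.1]⟩
  have hv' : L - v ∈ Icc 0 L := ⟨by linarith [hv.2], by linarith [hv.1]⟩
  refine ⟨τ (σ 0 + u), τ (σ 0 + (u + L / 2 - v)), τ (σ 0 + (L - v)), ?_,
    hτ' hu' hw' (by linarith [hv.2]), hτ' hw' hv' (by linarith [hu.2]), ?_, e.injective ?_, ?_⟩
  · simpa [hτσ h0] using hτ' ⟨le_rfl, hL.le⟩ hu' hu.1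
  · simpa [hLdef, hτσ h1] using hτ' hv' ⟨hL.le, le_rfl⟩ (by linarith [hv.1])
  · simpa [Γ, hτσ h0] using huv
  · rw [hστ (hI hu'), hστ (hI hw'), hστ (hI hv')]
    linarith

theorem strictMonoOn_primitive_of_pos {f : ℝ → ℝ} {a b : ℝ} (hf : IntegrableOn f (Icc a b))
    (hpos : ∀ t ∈ Ioo a b, 0 < f t) : StrictMonoOn (fun t => ∫ x in a..t, f x) (Icc a b) := by
  intro x hx y hy hxy
  have hint {p q : ℝ} (hp : p ∈ Icc a b) (hq : q ∈ Icc a b) : IntervalIntegrable f volume p q :=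
    (hf.mono_set (uIcc_subset_Icc hp hq)).intervalIntegrable
  have := intervalIntegral.intervalIntegral_pos_of_pos_on (hint hx hy)
    (fun t ht => hpos t ⟨hx.1.trans_lt ht.1, ht.2.trans_le hy.2⟩) hxy
  rw [← intervalIntegral.integral_interval_sub_left (hint (left_mem_Icc.2 (hx.1.trans hx.2)) hy)
    (hint (left_mem_Icc.2 (hx.1.trans hx.2)) hx)] at this
  simpa using this

/-- Any planar simple `C¹` loop with nonvanishing derivative inscribes a non-degenerate
parallelogram with one vertex at the prescribed point `γ 0`, cutting the loop into four
pieces such that opposite pieces have equal total arc length. -/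
theorem c1_loop_parallelogram (γ γ' : ℝ → EuclideanSpace ℝ (Fin 2))
    (hderiv : ∀ t ∈ Set.Icc (0 : ℝ) 1, HasDerivWithinAt γ (γ' t) (Set.Icc 0 1) t)
    (hcont : ContinuousOn γ' (Set.Icc 0 1))
    (hloop : γ 0 = γ 1) (hinj : Set.InjOn γ (Set.Ico 0 1))
    (hne : ∀ t ∈ Set.Icc (0 : ℝ) 1, γ' t ≠ 0) :
    ∃ a b c : ℝ, 0 ≤ a ∧ a ≤ b ∧ b ≤ c ∧ c ≤ 1 ∧
      γ 0 + γ b = γ a + γ c ∧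
      (γ 0 ≠ γ a ∧ γ 0 ≠ γ b ∧ γ 0 ≠ γ c ∧ γ a ≠ γ b ∧ γ a ≠ γ c ∧ γ b ≠ γ c) ∧
      (∫ t in (0 : ℝ)..a, ‖γ' t‖) + (∫ t in b..c, ‖γ' t‖) =
        (∫ t in a..b, ‖γ' t‖) + (∫ t in c..1, ‖γ' t‖) := by
  set s : ℝ → ℝ := fun t => ∫ x in (0 : ℝ)..t, ‖γ' x‖
  have hint : IntegrableOn (fun x => ‖γ' x‖) (Icc 0 1) := hcont.norm.integrableOn_Icc
  have hs : StrictMonoOn s (Icc 0 1) := strictMonoOn_primitive_of_pos hint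
    fun t ht => norm_pos_iff.2 (hne t (Ioo_subset_Icc_self ht))
  have hsc : ContinuousOn s (Icc 0 1) := by
    simpa using intervalIntegral.continuousOn_primitive_interval (a := 0) (b := 1)
      (by simpa using hint)
  obtain ⟨a, b, c, h0a, hab, hbc, hc1, hpar, hlen⟩ :=
    exists_parallelogram_of_strictMonoOn finrank_euclideanSpace_fin
      (fun t ht => (hderiv t ht).continuousWithinAt) hloop hinj hs hsc
  have hγne (x y : ℝ) (hx : 0 ≤ x) (hxy : x < y) (hy : y < 1) : γ x ≠ γ y :=
    hinj.ne ⟨hx, hxy.trans hy⟩ ⟨hx.trans hxy.le, hy⟩ hxy.ne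
  refine ⟨a, b, c, h0a.le, hab.le, hbc.le, hc1.le, hpar, ?_, ?_⟩
  · refine ⟨hγne 0 a ?_ ?_ ?_, hγne 0 b ?_ ?_ ?_, hγne 0 c ?_ ?_ ?_, hγne a b ?_ ?_ ?_,
      hγne a c ?_ ?_ ?_, hγne b c ?_ ?_ ?_⟩ <;> linarith
  have hsub {x y : ℝ} (hx : x ∈ Icc (0 : ℝ) 1) (hy : y ∈ Icc (0 : ℝ) 1) :
      ∫ t in x..y, ‖γ' t‖ = s y - s x :=
    have hint₀ {z : ℝ} (hz : z ∈ Icc (0 : ℝ) 1) :=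
      (hint.mono_set (uIcc_subset_Icc (left_mem_Icc.2 zero_le_one) hz)).intervalIntegrable
    (intervalIntegral.integral_interval_sub_left (hint₀ hy) (hint₀ hx)).symm
  rw [hsub (left_mem_Icc.2 zero_le_one) ⟨h0a.le, by linarith⟩,
    hsub ⟨by linarith, by linarith⟩ ⟨by linarith, hc1.le⟩,
    hsub ⟨h0a.le, by linarith⟩ ⟨by linarith, by linarith⟩,
    hsub ⟨by linarith, hc1.le⟩ (right_mem_Icc.2 zero_le_one)]
  exact hlen
end

section
/- Let A, B, C, D ∈ ℝ² be points satisfying A + C = B + D (so that A, B, C, D in cyclic order are the vertices of a parallelogram). If there exists a point P ∈ ℝ² such that ‖P−A‖² + ‖P−C‖² = ‖P−B‖² + ‖P−D‖², then the diagonals have equal length, ‖A−C‖ = ‖B−D‖, and equivalently the adjacent sides are orthogonal: ⟨B−A, C−B⟩ = 0; that is, ABCD is a rectangle. -/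
/-!
By the parallelogram law, `‖P - A‖² + ‖P - C‖² = (‖2P - (A + C)‖² + ‖A - C‖²) / 2`, and
likewise for `B, D`. Since `A + C = B + D`, the first terms agree, so the hypothesis on `P` says
exactly that the diagonals have equal length. With `u = B - A` and `v = C - B` the diagonals are
`-(u + v)` and `u - v`, and `‖u + v‖ = ‖u - v‖` holds iff `⟪u, v⟫ = 0`.
-/

open InnerProductGeometry

section Parallelogram

variable {V : Type*} [NormedAddCommGroup V] [InnerProductSpace ℝ V]

theorem two_mul_norm_sub_sq_add_norm_sub_sq (P A C : V) :
    2 * (‖P - A‖ ^ 2 + ‖P - C‖ ^ 2) = ‖2 • P - (A + C)‖ ^ 2 + ‖A - C‖ ^ 2 := by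
  rw [← parallelogram_law_with_norm ℝ (P - A) (P - C), two_nsmul, norm_sub_rev A C]
  congr 3 <;> abel

theorem norm_sub_eq_norm_sub_of_add_eq_add_of_sum_norm_sq_eq {A B C D P : V}
    (hpar : A + C = B + D)
    (hP : ‖P - A‖ ^ 2 + ‖P - C‖ ^ 2 = ‖P - B‖ ^ 2 + ‖P - D‖ ^ 2) :
    ‖A - C‖ = ‖B - D‖ := by
  have hsq : ‖A - C‖ ^ 2 = ‖B - D‖ ^ 2 := by
    have h := two_mul_norm_sub_sq_add_norm_sub_sq P A C
    rw [hP, two_mul_norm_sub_sq_add_norm_sub_sq, hpar] at h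
    linarith
  exact (sq_eq_sq₀ (norm_nonneg _) (norm_nonneg _)).1 hsq

theorem norm_add_eq_norm_sub_iff_real_inner_eq_zero (u v : V) :
    ‖u + v‖ = ‖u - v‖ ↔ inner ℝ u v = 0 := by
  rw [norm_add_eq_norm_sub_iff_angle_eq_pi_div_two, inner_eq_zero_iff_angle_eq_pi_div_two]

theorem norm_sub_eq_norm_sub_iff_real_inner_eq_zero_of_add_eq_add {A B C D : V}
    (hpar : A + C = B + D) :
    ‖A - C‖ = ‖B - D‖ ↔ inner ℝ (B - A) (C - B) = 0 := by
  have hAC : A - C = -((B - A) + (C - B)) := by abel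
  have hBD : B - D = (B - A) - (C - B) := by
    rw [eq_sub_of_add_eq' hpar.symm]; abel
  rw [hAC, hBD, norm_neg, norm_add_eq_norm_sub_iff_real_inner_eq_zero]

end Parallelogram

/-- **Converse of the British Flag Theorem.** If `A, B, C, D` (in cyclic order) are the
vertices of a parallelogram (`A + C = B + D`) and some point `P` satisfies
`‖P-A‖² + ‖P-C‖² = ‖P-B‖² + ‖P-D‖²`, then `ABCD` is a rectangle: the diagonals have
equal length and adjacent sides are orthogonal. -/
theorem converse_british_flag (A B C D P : EuclideanSpace ℝ (Fin 2))
    (hpar : A + C = B + D)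
    (hP : ‖P - A‖ ^ 2 + ‖P - C‖ ^ 2 = ‖P - B‖ ^ 2 + ‖P - D‖ ^ 2) :
    ‖A - C‖ = ‖B - D‖ ∧ (inner ℝ (B - A) (C - B) : ℝ) = 0 := by
  have hdiag := norm_sub_eq_norm_sub_of_add_eq_add_of_sum_norm_sq_eq hpar hP
  exact ⟨hdiag, (norm_sub_eq_norm_sub_iff_real_inner_eq_zero_of_add_eq_add hpar).1 hdiag⟩
end
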